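/- Let T : H → H be nonexpansive with Fix T nonempty and let x_{k+1} := α_k v + (1 − α_k) T(x_k) with α_k ∈ (0,1), α_k → 0, Σ α_k = +∞. If in addition |α_{k+1} − α_k|/α_{k+1} → 0 as k → +∞, then ‖x_k − T(x_k)‖ → 0 and x_k converges strongly to P_{Fix T}(v). -/

import Mathlib

/-!
For `τ > 0` the equation `z - T z = τ • (v - z)` has a solution `z_τ` (Banach), and monotonicity
of `I - T` shows that `‖v - z_τ‖²` increases as `τ ↓ 0` and dominates `‖z_τ - z_σ‖²` through its
increments. Being bounded by `‖v - p‖²` for any fixed point `p`, it converges, so `z_τ` converges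
to a fixed point `ξ` satisfying `⟪v - ξ, ξ - w⟫ ≥ 0` for every fixed point `w`, i.e.
`ξ = P_{Fix T} v` (Browder).

For the Halpern iterates, the condition on `|α (k + 1) - α k| / α (k + 1)` turns the estimate of
`‖x (k + 2) - x (k + 1)‖` into a recursion `s (k + 1) ≤ (1 - α k) s k + α k β k` with `β k → 0`
(Xu's lemma), whence `‖x k - T x k‖ → 0`. Monotonicity of `I - T` again gives
`τ ⟪v - z_τ, x k - z_τ⟫ ≤ ‖x k - T x k‖ ‖x k - z_τ‖ → 0`; letting `z_τ → ξ` yields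
`limsup ⟪v - ξ, x k - ξ⟫ ≤ 0`, and Xu's lemma applied to `‖x k - ξ‖²` concludes. No weak
compactness is needed.
-/

open Filter Topology InnerProductSpace

lemma tendsto_zero_of_le_one_sub_mul {α u : ℕ → ℝ} (hα : ∀ k, 0 ≤ α k) (hαs : ¬Summable α)
    (hu0 : ∀ k, 0 ≤ u k) (hu : ∀ k, u (k + 1) ≤ (1 - α k) * u k) :
    Tendsto u atTop (𝓝 0) := by
  have hexp : ∀ n, u n ≤ Real.exp (-∑ i ∈ Finset.range n, α i) * u 0 := by
    intro n
    induction n with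
    | zero => simp
    | succ n ih =>
      calc u (n + 1) ≤ (1 - α n) * u n := hu n
        _ ≤ Real.exp (-α n) * u n := by
          gcongr
          · exact hu0 n
          · linarith [Real.add_one_le_exp (-α n)]
        _ ≤ Real.exp (-α n) * (Real.exp (-∑ i ∈ Finset.range n, α i) * u 0) := by gcongr
        _ = Real.exp (-∑ i ∈ Finset.range (n + 1), α i) * u 0 := by
          rw [Finset.sum_range_succ, neg_add, Real.exp_add]
          ring
  have hsum := (not_summable_iff_tendsto_nat_atTop_of_nonneg hα).1 hαs
  have hbound : Tendsto (fun n => Real.exp (-∑ i ∈ Finset.range n, α i) * u 0) atTop (𝓝 0) := by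
    simpa using (Real.tendsto_exp_atBot.comp (tendsto_neg_atTop_atBot.comp hsum)).mul_const (u 0)
  exact squeeze_zero hu0 hexp hbound

lemma tendsto_zero_of_le_one_sub_mul_add_mul {α s β : ℕ → ℝ} (hα : ∀ k, α k ∈ Set.Icc 0 1)
    (hαs : ¬Summable α) (hs0 : ∀ k, 0 ≤ s k)
    (hs : ∀ k, s (k + 1) ≤ (1 - α k) * s k + α k * β k)
    (hβ : ∀ ε > 0, ∀ᶠ k in atTop, β k ≤ ε) :
    Tendsto s atTop (𝓝 0) := by
  refine tendsto_order.2 ⟨fun a ha => Eventually.of_forall fun k => ha.trans_le (hs0 k),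
    fun ε hε => ?_⟩
  obtain ⟨K, hK⟩ := eventually_atTop.1 (hβ (ε / 2) (half_pos hε))
  -- past `K`, each step multiplies the excess of `s` over `ε / 2` by at most `1 - α k`
  set u : ℕ → ℝ := fun k => max (s (k + K) - ε / 2) 0
  have hu : Tendsto u atTop (𝓝 0) := by
    refine tendsto_zero_of_le_one_sub_mul (α := fun k => α (k + K)) (fun k => (hα _).1)
      ((summable_nat_add_iff K).not.2 hαs) (fun k => le_max_right _ _) fun k => ?_
    have hαk := hα (k + K)
    have hβk := mul_le_mul_of_nonneg_left (hK (k + K) (by omega)) hαk.1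
    have hsk := hs (k + K)
    rw [show k + K + 1 = k + 1 + K by omega] at hsk
    show max (s (k + 1 + K) - ε / 2) 0 ≤ (1 - α (k + K)) * u k
    refine max_le ?_ (mul_nonneg (sub_nonneg.2 hαk.2) (le_max_right _ _))
    calc s (k + 1 + K) - ε / 2 ≤ (1 - α (k + K)) * (s (k + K) - ε / 2) := by linarith
      _ ≤ (1 - α (k + K)) * u k :=
        mul_le_mul_of_nonneg_left (le_max_left _ _) (sub_nonneg.2 hαk.2)
  rw [← map_add_atTop_eq_nat K, eventually_map]
  filter_upwards [hu.eventually_lt_const (half_pos hε)] with k hk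
  linarith [le_max_left (s (k + K) - ε / 2) 0]

lemma cauchySeq_of_dist_sq_le {X : Type*} [PseudoMetricSpace X] {z : ℕ → X} {g : ℕ → ℝ}
    (hg : CauchySeq g) (h : ∀ n m, n ≤ m → dist (z n) (z m) ^ 2 ≤ dist (g n) (g m)) :
    CauchySeq z := by
  rw [Metric.cauchySeq_iff'] at hg ⊢
  intro ε hε
  obtain ⟨N, hN⟩ := hg (ε ^ 2) (by positivity)
  refine ⟨N, fun n hn => ?_⟩
  rw [dist_comm]
  exact (pow_lt_pow_iff_left₀ dist_nonneg hε.le two_ne_zero).1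
    ((h N n hn).trans_lt (dist_comm (g N) (g n) ▸ hN n hn))

lemma LipschitzWith.norm_sub_le_norm_sub {E : Type*} [SeminormedAddCommGroup E] {T : E → E}
    (hT : LipschitzWith 1 T) (a b : E) : ‖T a - T b‖ ≤ ‖a - b‖ := by
  simpa using hT.norm_sub_le a b

section InnerProduct

variable {H : Type*} [NormedAddCommGroup H] [InnerProductSpace ℝ H]

lemma norm_sub_sq_add_norm_sub_sq_le {a b c : H} (h : 0 ≤ ⟪a - b, b - c⟫_ℝ) :
    ‖a - b‖ ^ 2 + ‖b - c‖ ^ 2 ≤ ‖a - c‖ ^ 2 := by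
  rw [show a - c = (a - b) + (b - c) by abel, norm_add_sq_real]
  linarith

lemma norm_add_sq_le_norm_sq_add_two_inner (y w : H) :
    ‖y + w‖ ^ 2 ≤ ‖w‖ ^ 2 + 2 * ⟪y, y + w⟫_ℝ := by
  rw [norm_add_sq_real, inner_add_right, real_inner_self_eq_norm_sq]
  nlinarith [sq_nonneg ‖y‖]

lemma inner_sub_le_inner_sub_add (v y ξ u : H) :
    ⟪v - ξ, u - ξ⟫_ℝ ≤ ⟪v - y, u - y⟫_ℝ + ‖y - ξ‖ * (‖v - y‖ + ‖u - ξ‖) := by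
  have hsplit : ⟪v - ξ, u - ξ⟫_ℝ = ⟪v - y, u - y⟫_ℝ + ⟪v - y, y - ξ⟫_ℝ + ⟪y - ξ, u - ξ⟫_ℝ := by
    simp only [inner_sub_left, inner_sub_right]
    ring
  have h₁ := real_inner_le_norm (v - y) (y - ξ)
  have h₂ := real_inner_le_norm (y - ξ) (u - ξ)
  rw [hsplit]
  nlinarith

lemma isClosed_setOf_eventually_inner_le {x : ℕ → H} (hx : Bornology.IsBounded (Set.range x))
    (v : H) : IsClosed {y : H | ∀ ε > 0, ∀ᶠ k in atTop, ⟪v - y, x k - y⟫_ℝ ≤ ε} := by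
  refine isClosed_of_closure_subset fun ξ hξ ε hε => ?_
  obtain ⟨r, hr⟩ := (Metric.isBounded_iff_subset_closedBall ξ).1 hx
  have hxr : ∀ k, ‖x k - ξ‖ ≤ r := fun k => by
    simpa [dist_eq_norm] using hr (Set.mem_range_self k)
  set C := ‖v - ξ‖ + 1 + r
  have hC : 0 < C := by linarith [norm_nonneg (v - ξ), (norm_nonneg _).trans (hxr 0)]
  set δ := min 1 (ε / (2 * C))
  obtain ⟨y, hy, hξy⟩ := Metric.mem_closure_iff.1 hξ δ (by positivity)
  rw [dist_eq_norm] at hξy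
  have hvy : ‖v - y‖ ≤ ‖v - ξ‖ + 1 := by
    linarith [norm_sub_le_norm_sub_add_norm_sub v ξ y, min_le_left 1 (ε / (2 * C))]
  have hδC : δ * C ≤ ε / 2 := by
    calc δ * C ≤ ε / (2 * C) * C := by gcongr; exact min_le_right _ _
      _ = ε / 2 := by field_simp
  filter_upwards [hy (ε / 2) (half_pos hε)] with k hk
  have hyξ : ‖y - ξ‖ * (‖v - y‖ + ‖x k - ξ‖) ≤ δ * C := by
    rw [norm_sub_rev]
    gcongr
    linarith [hxr k]
  linarith [inner_sub_le_inner_sub_add v y ξ (x k)]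

end InnerProduct

section Nonexpansive

variable {H : Type*} [NormedAddCommGroup H] [InnerProductSpace ℝ H] {T : H → H}

lemma LipschitzWith.inner_id_sub_nonneg (hT : LipschitzWith 1 T) (a b : H) :
    0 ≤ ⟪(a - T a) - (b - T b), a - b⟫_ℝ := by
  have hTab : ⟪T a - T b, a - b⟫_ℝ ≤ ‖a - b‖ * ‖a - b‖ :=
    (real_inner_le_norm _ _).trans
      (mul_le_mul_of_nonneg_right (hT.norm_sub_le_norm_sub a b) (norm_nonneg _))
  rw [show (a - T a) - (b - T b) = (a - b) - (T a - T b) by abel, inner_sub_left,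
    real_inner_self_eq_norm_mul_norm]
  linarith

/-- Browder's path `z_t = t • v + (1 - t) • T z_t`, parametrized by `τ = t / (1 - t)`. -/
def browderCurve (T : H → H) (v : H) : Set H := {z | ∃ τ > (0 : ℝ), z - T z = τ • (v - z)}

lemma exists_sub_apply_eq_smul [CompleteSpace H] (hT : LipschitzWith 1 T) (v : H) {τ : ℝ}
    (hτ : 0 < τ) : ∃ z, z - T z = τ • (v - z) := by
  have : Nonempty H := ⟨v⟩
  set f : H → H := fun z => (1 + τ)⁻¹ • (T z + τ • v)
  have hlip : LipschitzWith (1 + τ)⁻¹.toNNReal f := by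
    refine LipschitzWith.of_dist_le' fun a b => ?_
    have hfab : f a - f b = (1 + τ)⁻¹ • (T a - T b) := by simp only [f]; module
    rw [dist_eq_norm, dist_eq_norm, hfab, norm_smul, Real.norm_of_nonneg (by positivity)]
    gcongr
    exact hT.norm_sub_le_norm_sub a b
  have hf : ContractingWith (1 + τ)⁻¹.toNNReal f :=
    ⟨by rw [Real.toNNReal_lt_one]; exact inv_lt_one_of_one_lt₀ (by linarith), hlip⟩
  obtain ⟨z, hfz⟩ : ∃ z, f z = z := ⟨_, ContractingWith.fixedPoint_isFixedPt hf⟩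
  have hz : (1 + τ) • z = T z + τ • v := by
    nth_rewrite 1 [← hfz]
    simp only [f, smul_smul, mul_inv_cancel₀ (by linarith : (1 + τ) ≠ 0), one_smul]
  refine ⟨z, ?_⟩
  calc z - T z = ((1 + τ) • z - T z) - τ • z := by module
    _ = τ • (v - z) := by rw [hz]; module

variable {v z w : H} {τ : ℝ}

lemma inner_sub_nonneg_of_sub_apply_eq_smul (hT : LipschitzWith 1 T) (hτ : 0 < τ)
    (hz : z - T z = τ • (v - z)) (hw : T w = w) : 0 ≤ ⟪v - z, z - w⟫_ℝ := by
  have h := hT.inner_id_sub_nonneg z w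
  rw [hz, hw, sub_self, sub_zero, real_inner_smul_left] at h
  exact nonneg_of_mul_nonneg_right (by linarith) hτ

lemma inner_sub_nonneg_of_mem_closure_browderCurve (hT : LipschitzWith 1 T)
    (hz : z ∈ closure (browderCurve T v)) (hw : T w = w) : 0 ≤ ⟪v - z, z - w⟫_ℝ := by
  have hclosed : IsClosed {y : H | 0 ≤ ⟪v - y, y - w⟫_ℝ} :=
    isClosed_le continuous_const (by fun_prop)
  refine closure_minimal (fun y hy => ?_) hclosed hz
  obtain ⟨τ, hτ, hy⟩ := hy
  exact inner_sub_nonneg_of_sub_apply_eq_smul hT hτ hy hw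

lemma norm_sub_le_of_mem_closure_browderCurve (hT : LipschitzWith 1 T)
    (hz : z ∈ closure (browderCurve T v)) (hw : T w = w) : ‖v - z‖ ≤ ‖v - w‖ := by
  have h := norm_sub_sq_add_norm_sub_sq_le (inner_sub_nonneg_of_mem_closure_browderCurve hT hz hw)
  exact (pow_le_pow_iff_left₀ (norm_nonneg _) (norm_nonneg _) two_ne_zero).1
    (by linarith [sq_nonneg ‖z - w‖])

lemma norm_sub_sq_le_of_sub_apply_eq_smul (hT : LipschitzWith 1 T) {z₁ z₂ : H} {τ₁ τ₂ : ℝ}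
    (hτ₂ : 0 < τ₂) (hτ : τ₂ < τ₁) (hz₁ : z₁ - T z₁ = τ₁ • (v - z₁))
    (hz₂ : z₂ - T z₂ = τ₂ • (v - z₂)) :
    ‖z₁ - z₂‖ ^ 2 ≤ ‖v - z₂‖ ^ 2 - ‖v - z₁‖ ^ 2 := by
  have h := hT.inner_id_sub_nonneg z₁ z₂
  rw [hz₁, hz₂, show z₁ - z₂ = (v - z₂) - (v - z₁) by abel] at h
  rw [show z₁ - z₂ = (v - z₂) - (v - z₁) by abel]
  set a := v - z₁
  set b := v - z₂
  simp only [inner_sub_left, inner_sub_right, real_inner_smul_left, real_inner_comm a b,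
    real_inner_self_eq_norm_sq] at h
  have key : (τ₁ + τ₂) * ‖b - a‖ ^ 2 ≤ (τ₁ - τ₂) * (‖b‖ ^ 2 - ‖a‖ ^ 2) := by
    rw [norm_sub_sq_real b a, real_inner_comm a b]
    linarith
  have hmono : 0 ≤ ‖b‖ ^ 2 - ‖a‖ ^ 2 :=
    nonneg_of_mul_nonneg_right ((mul_nonneg (by linarith) (sq_nonneg _)).trans key)
      (by linarith)
  refine le_of_mul_le_mul_left (key.trans ?_) (by linarith : 0 < τ₁ + τ₂)
  exact mul_le_mul_of_nonneg_right (by linarith) hmono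

theorem exists_fixedPoint_mem_closure_browderCurve [CompleteSpace H] (hT : LipschitzWith 1 T)
    {p : H} (hp : T p = p) (v : H) : ∃ ξ ∈ closure (browderCurve T v), T ξ = ξ := by
  set τ : ℕ → ℝ := fun n => 1 / ((n : ℝ) + 1)
  have hτ : ∀ n, 0 < τ n := fun n => by positivity
  have hτ_anti : StrictAnti τ := fun n m hnm => by
    simp only [τ]
    gcongr
  choose z hz using fun n => exists_sub_apply_eq_smul hT v (hτ n)
  set g : ℕ → ℝ := fun n => ‖v - z n‖ ^ 2
  have hgz : ∀ n m, n < m → ‖z n - z m‖ ^ 2 ≤ g m - g n := fun n m hnm =>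
    norm_sub_sq_le_of_sub_apply_eq_smul hT (hτ m) (hτ_anti hnm) (hz n) (hz m)
  have hg_mono : Monotone g := monotone_nat_of_le_succ fun n => by
    linarith [hgz n (n + 1) n.lt_succ_self, sq_nonneg ‖z n - z (n + 1)‖]
  have hg_bdd : BddAbove (Set.range g) := ⟨‖v - p‖ ^ 2, Set.forall_mem_range.2 fun n =>
    pow_le_pow_left₀ (norm_nonneg _)
      (norm_sub_le_of_mem_closure_browderCurve hT (subset_closure ⟨τ n, hτ n, hz n⟩) hp) 2⟩
  have hz_cauchy : CauchySeq z := by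
    refine cauchySeq_of_dist_sq_le (tendsto_atTop_ciSup hg_mono hg_bdd).cauchySeq fun n m hnm => ?_
    rcases hnm.eq_or_lt with rfl | hlt
    · simp
    rw [dist_eq_norm, Real.dist_eq, abs_sub_comm, abs_of_nonneg (sub_nonneg.2 (hg_mono hnm))]
    exact hgz n m hlt
  obtain ⟨ξ, hξ⟩ := cauchySeq_tendsto_of_complete hz_cauchy
  refine ⟨ξ, mem_closure_of_tendsto hξ (Eventually.of_forall fun n => ⟨τ n, hτ n, hz n⟩), ?_⟩
  have hres : Tendsto (fun n => z n - T (z n)) atTop (𝓝 (ξ - T ξ)) :=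
    hξ.sub ((hT.continuous.tendsto ξ).comp hξ)
  have hres_zero : Tendsto (fun n => z n - T (z n)) atTop (𝓝 0) := by
    have hτ0 : Tendsto τ atTop (𝓝 0) := tendsto_one_div_add_atTop_nhds_zero_nat
    simpa [hz] using hτ0.smul (tendsto_const_nhds.sub hξ)
  exact (sub_eq_zero.1 (tendsto_nhds_unique hres hres_zero)).symm

lemma eventually_inner_le_of_mem_browderCurve (hT : LipschitzWith 1 T) {x : ℕ → H}
    (hx : Bornology.IsBounded (Set.range x))
    (hres : Tendsto (fun k => ‖x k - T (x k)‖) atTop (𝓝 0)) (hz : z ∈ browderCurve T v) :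
    ∀ ε > 0, ∀ᶠ k in atTop, ⟪v - z, x k - z⟫_ℝ ≤ ε := by
  intro ε hε
  obtain ⟨τ, hτ, hzτ⟩ := hz
  obtain ⟨r, hr⟩ := (Metric.isBounded_iff_subset_closedBall z).1 hx
  have hτinner : ∀ k, τ * ⟪v - z, x k - z⟫_ℝ ≤ ‖x k - T (x k)‖ * r := fun k => by
    have hmono := hT.inner_id_sub_nonneg (x k) z
    have hxr : ‖x k - z‖ ≤ r := by simpa [dist_eq_norm] using hr (Set.mem_range_self k)
    rw [hzτ, inner_sub_left, real_inner_smul_left] at hmono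
    nlinarith [real_inner_le_norm (x k - T (x k)) (x k - z), norm_nonneg (x k - T (x k))]
  have hsmall : ∀ᶠ k in atTop, ‖x k - T (x k)‖ * r < τ * ε :=
    (by simpa using hres.mul_const r : Tendsto (fun k => ‖x k - T (x k)‖ * r) atTop (𝓝 0))
      |>.eventually_lt_const (mul_pos hτ hε)
  filter_upwards [hsmall] with k hk
  exact (mul_le_mul_iff_right₀ hτ).1 ((hτinner k).trans hk.le)

lemma eventually_inner_le_of_mem_closure_browderCurve (hT : LipschitzWith 1 T) {x : ℕ → H}
    (hx : Bornology.IsBounded (Set.range x))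
    (hres : Tendsto (fun k => ‖x k - T (x k)‖) atTop (𝓝 0))
    (hz : z ∈ closure (browderCurve T v)) :
    ∀ ε > 0, ∀ᶠ k in atTop, ⟪v - z, x k - z⟫_ℝ ≤ ε :=
  closure_minimal (fun _ hy => eventually_inner_le_of_mem_browderCurve hT hx hres hy)
    (isClosed_setOf_eventually_inner_le hx v) hz

end Nonexpansive

section Halpern

variable {H : Type*} [NormedAddCommGroup H] [InnerProductSpace ℝ H] {T : H → H} {v : H}
  {α : ℕ → ℝ} {x : ℕ → H}

lemma norm_halpern_sub_le (hT : LipschitzWith 1 T) (hα : ∀ k, α k ∈ Set.Icc 0 1)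
    (hx : ∀ k, x (k + 1) = α k • v + (1 - α k) • T (x k)) {p : H} (hp : T p = p) (k : ℕ) :
    ‖x k - p‖ ≤ max ‖x 0 - p‖ ‖v - p‖ := by
  induction k with
  | zero => exact le_max_left _ _
  | succ k ih =>
    obtain ⟨hα₀, hα₁⟩ := hα k
    have hTp : ‖T (x k) - p‖ ≤ ‖x k - p‖ := by
      simpa only [hp] using hT.norm_sub_le_norm_sub (x k) p
    rw [hx k, show α k • v + (1 - α k) • T (x k) - p = α k • (v - p) + (1 - α k) • (T (x k) - p)
      by module]
    calc ‖α k • (v - p) + (1 - α k) • (T (x k) - p)‖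
        ≤ α k * ‖v - p‖ + (1 - α k) * ‖T (x k) - p‖ :=
          convexOn_univ_norm.2 trivial trivial hα₀ (sub_nonneg.2 hα₁) (by ring)
      _ ≤ α k * max ‖x 0 - p‖ ‖v - p‖ + (1 - α k) * max ‖x 0 - p‖ ‖v - p‖ :=
          add_le_add (mul_le_mul_of_nonneg_left (le_max_right _ _) hα₀)
            (mul_le_mul_of_nonneg_left (hTp.trans ih) (sub_nonneg.2 hα₁))
      _ = max ‖x 0 - p‖ ‖v - p‖ := by ring

lemma norm_halpern_succ_sub_le (hT : LipschitzWith 1 T) (hα : ∀ k, α k ∈ Set.Icc 0 1)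
    (hx : ∀ k, x (k + 1) = α k • v + (1 - α k) • T (x k)) (k : ℕ) :
    ‖x (k + 2) - x (k + 1)‖
      ≤ (1 - α (k + 1)) * ‖x (k + 1) - x k‖ + |α (k + 1) - α k| * ‖v - T (x k)‖ := by
  have h1α : 0 ≤ 1 - α (k + 1) := sub_nonneg.2 (hα (k + 1)).2
  have hdiff : x (k + 2) - x (k + 1)
      = (1 - α (k + 1)) • (T (x (k + 1)) - T (x k)) + (α (k + 1) - α k) • (v - T (x k)) := by
    rw [hx (k + 1)]
    linear_combination (norm := module) -(hx k)
  rw [hdiff]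
  calc _ ≤ ‖(1 - α (k + 1)) • (T (x (k + 1)) - T (x k))‖ + ‖(α (k + 1) - α k) • (v - T (x k))‖ :=
        norm_add_le _ _
    _ = (1 - α (k + 1)) * ‖T (x (k + 1)) - T (x k)‖ + |α (k + 1) - α k| * ‖v - T (x k)‖ := by
        rw [norm_smul, norm_smul, Real.norm_of_nonneg h1α, Real.norm_eq_abs]
    _ ≤ _ := by gcongr; exact hT.norm_sub_le_norm_sub _ _

lemma tendsto_norm_halpern_succ_sub (hT : LipschitzWith 1 T) (hα : ∀ k, α k ∈ Set.Ioc 0 1)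
    (hαs : ¬Summable α) (hαq : Tendsto (fun k => |α (k + 1) - α k| / α (k + 1)) atTop (𝓝 0))
    (hx : ∀ k, x (k + 1) = α k • v + (1 - α k) • T (x k)) {C : ℝ}
    (hC : ∀ k, ‖v - T (x k)‖ ≤ C) :
    Tendsto (fun k => ‖x (k + 1) - x k‖) atTop (𝓝 0) := by
  have hαI : ∀ k, α k ∈ Set.Icc 0 1 := fun k => Set.Ioc_subset_Icc_self (hα k)
  -- `β k` is chosen so that `α (k + 1) * β k = C * |α (k + 1) - α k|`
  refine tendsto_zero_of_le_one_sub_mul_add_mul (α := fun k => α (k + 1))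
    (β := fun k => C * (|α (k + 1) - α k| / α (k + 1))) (fun k => hαI (k + 1))
    ((summable_nat_add_iff 1).not.2 hαs) (fun k => norm_nonneg _) (fun k => ?_) fun ε hε => ?_
  · have hstep := norm_halpern_succ_sub_le hT hαI hx k
    have hCk := mul_le_mul_of_nonneg_left (hC k) (abs_nonneg (α (k + 1) - α k))
    have hsplit : α (k + 1) * (C * (|α (k + 1) - α k| / α (k + 1))) = |α (k + 1) - α k| * C := by
      field_simp [(hα (k + 1)).1.ne']
    rw [hsplit]
    linarith
  · have hβ : Tendsto (fun k => C * (|α (k + 1) - α k| / α (k + 1))) atTop (𝓝 0) := by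
      simpa using hαq.const_mul C
    exact hβ.eventually_le_const hε

lemma tendsto_norm_halpern_sub_apply (hα0 : Tendsto α atTop (𝓝 0))
    (hx : ∀ k, x (k + 1) = α k • v + (1 - α k) • T (x k)) {C : ℝ}
    (hC : ∀ k, ‖v - T (x k)‖ ≤ C) (hstep : Tendsto (fun k => ‖x (k + 1) - x k‖) atTop (𝓝 0)) :
    Tendsto (fun k => ‖x k - T (x k)‖) atTop (𝓝 0) := by
  have hbound : ∀ k, ‖x k - T (x k)‖ ≤ ‖x (k + 1) - x k‖ + |α k| * C := fun k => by
    have hxT : x (k + 1) - T (x k) = α k • (v - T (x k)) := by rw [hx k]; module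
    calc ‖x k - T (x k)‖ ≤ ‖x k - x (k + 1)‖ + ‖x (k + 1) - T (x k)‖ :=
          norm_sub_le_norm_sub_add_norm_sub _ _ _
      _ ≤ ‖x (k + 1) - x k‖ + |α k| * C := by
          rw [norm_sub_rev, hxT, norm_smul, Real.norm_eq_abs]
          gcongr
          exact hC k
  refine squeeze_zero (fun k => norm_nonneg _) hbound ?_
  simpa using hstep.add (hα0.abs.mul_const C)

lemma norm_halpern_sub_sq_le (hT : LipschitzWith 1 T) (hα : ∀ k, α k ∈ Set.Icc 0 1)
    (hx : ∀ k, x (k + 1) = α k • v + (1 - α k) • T (x k)) {p : H} (hp : T p = p) (k : ℕ) :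
    ‖x (k + 1) - p‖ ^ 2 ≤ (1 - α k) * ‖x k - p‖ ^ 2 + α k * (2 * ⟪v - p, x (k + 1) - p⟫_ℝ) := by
  obtain ⟨hα₀, hα₁⟩ := hα k
  have hsplit : x (k + 1) - p = α k • (v - p) + (1 - α k) • (T (x k) - p) := by
    rw [hx k]; module
  have hTp : ‖T (x k) - p‖ ≤ ‖x k - p‖ := by
    simpa only [hp] using hT.norm_sub_le_norm_sub (x k) p
  have hsq := norm_add_sq_le_norm_sq_add_two_inner (α k • (v - p)) ((1 - α k) • (T (x k) - p))
  rw [← hsplit, norm_smul, Real.norm_of_nonneg (sub_nonneg.2 hα₁), real_inner_smul_left] at hsq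
  have hcontr : ((1 - α k) * ‖T (x k) - p‖) ^ 2 ≤ (1 - α k) * ‖x k - p‖ ^ 2 := by
    rw [mul_pow]
    gcongr ?_ * ?_
    · nlinarith
    · exact pow_le_pow_left₀ (norm_nonneg _) hTp 2
  nlinarith

lemma tendsto_halpern_of_eventually_inner_le (hT : LipschitzWith 1 T)
    (hα : ∀ k, α k ∈ Set.Icc 0 1) (hαs : ¬Summable α)
    (hx : ∀ k, x (k + 1) = α k • v + (1 - α k) • T (x k)) {ξ : H} (hξ : T ξ = ξ)
    (hlim : ∀ ε > 0, ∀ᶠ k in atTop, ⟪v - ξ, x k - ξ⟫_ℝ ≤ ε) :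
    Tendsto x atTop (𝓝 ξ) := by
  have hsq : Tendsto (fun k => ‖x k - ξ‖ ^ 2) atTop (𝓝 0) := by
    refine tendsto_zero_of_le_one_sub_mul_add_mul hα hαs (fun k => sq_nonneg _)
      (norm_halpern_sub_sq_le hT hα hx hξ) fun ε hε => ?_
    filter_upwards [(tendsto_add_atTop_nat 1).eventually (hlim (ε / 2) (half_pos hε))] with k hk
    linarith
  rw [tendsto_iff_norm_sub_tendsto_zero]
  simpa [Real.sqrt_sq (norm_nonneg _)] using hsq.sqrt

end Halpern

theorem stmt8 {H : Type*} [NormedAddCommGroup H] [InnerProductSpace ℝ H] [CompleteSpace H]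
    (T : H → H) (hT : ∀ x y : H, ‖T x - T y‖ ≤ ‖x - y‖)
    (hfix : (Function.fixedPoints T).Nonempty)
    (v : H) (α : ℕ → ℝ) (hα : ∀ k, α k ∈ Set.Ioo (0:ℝ) 1)
    (hα0 : Tendsto α atTop (nhds 0)) (hαs : ¬ Summable α)
    (hαq : Tendsto (fun k => |α (k+1) - α k| / α (k+1)) atTop (nhds 0))
    (x : ℕ → H) (hx : ∀ k, x (k+1) = α k • v + (1 - α k) • T (x k)) :
    Tendsto (fun k => ‖x k - T (x k)‖) atTop (nhds 0) ∧
    ∃ ξ ∈ Function.fixedPoints T,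
      (∀ w ∈ Function.fixedPoints T, ‖v - ξ‖ ≤ ‖v - w‖) ∧
      Tendsto x atTop (nhds ξ) := by
  have hT' : LipschitzWith 1 T :=
    LipschitzWith.of_dist_le_mul fun a b => by simpa [dist_eq_norm] using hT a b
  have hαI : ∀ k, α k ∈ Set.Icc 0 1 := fun k => Set.Ioo_subset_Icc_self (hα k)
  obtain ⟨p, hp⟩ := hfix
  have hxp := norm_halpern_sub_le hT' hαI hx hp
  have hxb : Bornology.IsBounded (Set.range x) := Metric.isBounded_closedBall.subset
    (Set.range_subset_iff.2 fun k => mem_closedBall_iff_norm.2 (hxp k))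
  have hvT : ∀ k, ‖v - T (x k)‖ ≤ ‖v - p‖ + max ‖x 0 - p‖ ‖v - p‖ := fun k => by
    have hTp : ‖T (x k) - p‖ ≤ ‖x k - p‖ := by
      simpa only [show T p = p from hp] using hT (x k) p
    linarith [norm_sub_le_norm_sub_add_norm_sub v p (T (x k)), norm_sub_rev p (T (x k)), hxp k]
  have hres := tendsto_norm_halpern_sub_apply hα0 hx hvT
    (tendsto_norm_halpern_succ_sub hT' (fun k => Set.Ioo_subset_Ioc_self (hα k)) hαs hαq hx hvT)
  obtain ⟨ξ, hξ, hξfix⟩ := exists_fixedPoint_mem_closure_browderCurve hT' hp v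
  exact ⟨hres, ξ, hξfix, fun w hw => norm_sub_le_of_mem_closure_browderCurve hT' hξ hw,
    tendsto_halpern_of_eventually_inner_le hT' hαI hαs hx hξfix
      (eventually_inner_le_of_mem_closure_browderCurve hT' hxb hres hξ)⟩
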